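/- arXiv:2405.11759 — 2 statements merged into one kernel-verified Lean document; each statement's English description precedes it below -/
import Mathlib

section
/- Let (X₁, X₂) be bivariate standard normal with correlation ρ = −1 (i.e., X₂ = −X₁ with X₁ standard normal), and let α ∈ (0,1). Then for c > 0, sup_{μ₂ ≥ 0} P(X₁·(μ₂+X₂) < 0 and min(|X₁|, |μ₂+X₂|) > c) = P(|X₁| > c) = 2(1−Φ(c)). Hence the critical value solving the size equation at level α is c = Φ⁻¹(1−α/2). -/
/-!
With `X₂ = -X₁` the rejection event at any `μ₂` forces `c < |X₁|`, and at `μ₂ = 0` it is exactly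
`{c < |X₁|}` (for `c ≥ 0`, `X₁ ≠ 0` there, so `X₁ · (-X₁) < 0`), so the supremum is attained at the
boundary point `μ₂ = 0`. By the symmetry of the standard normal law,
`P(|X₁| > c) = P(X₁ < -c) + P(X₁ > c) = 2 (1 - Φ c)`.
-/

open MeasureTheory ProbabilityTheory

/-- The standard normal distribution on ℝ. -/
noncomputable def stdGauss : Measure ℝ := gaussianReal 0 1

/-- Φ, the standard normal CDF. -/
noncomputable def Φ : ℝ → ℝ := fun x => cdf stdGauss x

/-- The joint law of two independent standard normals. -/
noncomputable def P2 : Measure (ℝ × ℝ) := stdGauss.prod stdGauss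

instance : IsProbabilityMeasure stdGauss :=
  inferInstanceAs (IsProbabilityMeasure (gaussianReal 0 1))

lemma stdGauss_map_neg : stdGauss.map (fun x => -x) = stdGauss := by
  simpa [stdGauss] using gaussianReal_map_neg (μ := 0) (v := 1)

lemma stdGauss_Iio_neg (c : ℝ) : stdGauss (Set.Iio (-c)) = stdGauss (Set.Ioi c) := by
  nth_rw 1 [← stdGauss_map_neg]
  rw [Measure.map_apply measurable_neg measurableSet_Iio, Set.neg_preimage, Set.neg_Iio, neg_neg]

lemma stdGauss_real_Ioi (c : ℝ) : stdGauss.real (Set.Ioi c) = 1 - Φ c := by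
  rw [← Set.compl_Iic, probReal_compl_eq_one_sub measurableSet_Iic, Φ, cdf_eq_real]

lemma setOf_lt_abs_eq_Iio_union_Ioi (c : ℝ) : {x : ℝ | c < |x|} = Set.Iio (-c) ∪ Set.Ioi c := by
  ext x
  simp only [Set.mem_ofPred_eq, Set.mem_union, Set.mem_Iio, Set.mem_Ioi, lt_abs, lt_neg]
  exact or_comm

lemma stdGauss_real_lt_abs {c : ℝ} (hc : 0 ≤ c) :
    stdGauss.real {x : ℝ | c < |x|} = 2 * (1 - Φ c) := by
  have hdisj : Disjoint (Set.Iio (-c)) (Set.Ioi c) :=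
    Set.Iio_disjoint_Ioi_of_le (by linarith)
  rw [setOf_lt_abs_eq_Iio_union_Ioi, measureReal_union hdisj measurableSet_Ioi, measureReal_def,
    stdGauss_Iio_neg, ← measureReal_def, stdGauss_real_Ioi]
  ring

lemma setOf_rejection_zero_eq {c : ℝ} (hc : 0 ≤ c) :
    {x : ℝ | x * (0 + -x) < 0 ∧ c < min |x| |0 + -x|} = {x : ℝ | c < |x|} := by
  ext x
  simp only [Set.mem_ofPred_eq, zero_add, abs_neg, min_self, mul_neg, neg_lt_zero]
  exact and_iff_right_of_imp fun h => mul_self_pos.mpr (abs_pos.mp (hc.trans_lt h))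

lemma iSup_measure_rejection_eq (μ : Measure ℝ) {c : ℝ} (hc : 0 ≤ c) :
    (⨆ μ₂ : ℝ, ⨆ _ : μ₂ ≥ 0, μ {x : ℝ | x * (μ₂ + -x) < 0 ∧ c < min |x| |μ₂ + -x|})
      = μ {x : ℝ | c < |x|} := by
  refine le_antisymm (iSup₂_le fun μ₂ _ => measure_mono fun x hx => ?_) ?_
  · exact hx.2.trans_le (min_le_left _ _)
  · rw [← setOf_rejection_zero_eq hc]
    exact le_iSup₂_of_le (0 : ℝ) le_rfl le_rfl

theorem stmt13_general (α c : ℝ) (hc : 0 < c) :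
    (⨆ μ₂ : ℝ, ⨆ _ : μ₂ ≥ 0,
        stdGauss {x : ℝ | x * (μ₂ + -x) < 0 ∧ c < min |x| |μ₂ + -x|})
      = stdGauss {x : ℝ | c < |x|}
    ∧ (stdGauss {x : ℝ | c < |x|}).toReal = 2 * (1 - Φ c)
    ∧ (Φ c = 1 - α / 2 →
        (⨆ μ₂ : ℝ, ⨆ _ : μ₂ ≥ 0,
          stdGauss {x : ℝ | x * (μ₂ + -x) < 0 ∧ c < min |x| |μ₂ + -x|}).toReal = α) := by
  have hsup := iSup_measure_rejection_eq stdGauss hc.le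
  have hval : (stdGauss {x : ℝ | c < |x|}).toReal = 2 * (1 - Φ c) := stdGauss_real_lt_abs hc.le
  refine ⟨hsup, hval, fun hΦ => ?_⟩
  rw [hsup, hval, hΦ]
  ring

/-- Perfect negative correlation (X₂ = −X₁): the worst-case rejection
probability over the null boundary equals P(|X₁| > c) = 2(1−Φ(c)), so the
critical value solving the size equation at level α is c = Φ⁻¹(1−α/2). -/
theorem stmt13 (α c : ℝ) (hα : α ∈ Set.Ioo (0:ℝ) 1) (hc : 0 < c) :
    (⨆ μ₂ : ℝ, ⨆ _ : μ₂ ≥ 0,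
        stdGauss {x : ℝ | x * (μ₂ + -x) < 0 ∧ c < min |x| |μ₂ + -x|})
      = stdGauss {x : ℝ | c < |x|}
    ∧ (stdGauss {x : ℝ | c < |x|}).toReal = 2 * (1 - Φ c)
    ∧ (Φ c = 1 - α / 2 →
        (⨆ μ₂ : ℝ, ⨆ _ : μ₂ ≥ 0,
          stdGauss {x : ℝ | x * (μ₂ + -x) < 0 ∧ c < min |x| |μ₂ + -x|}).toReal = α) :=
  stmt13_general α c hc
end

section
/- Let X₁, X₂ be independent standard normal random variables and α ∈ (0, 1/2). For parameters (μ₁, μ₂) with μ₁ > 0 and μ₂ > 0 (interior of the null hypothesis), the rejection probability of the recommended test, P((μ₁+X₁)(μ₂+X₂) < 0 and min(|μ₁+X₁|, |μ₂+X₂|) > Φ⁻¹(1−α)), is strictly less than α. -/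
open MeasureTheory ProbabilityTheory

/-!
For `c ≥ 0` the rejection region is the union of the disjoint rectangles
`{X₁ < -c - μ₁, X₂ > c - μ₂}` and `{X₁ > c - μ₁, X₂ < -c - μ₂}`, so its probability is
`g₁ (1 - q₂) + (1 - q₁) g₂` with `gᵢ = Φ (-c - μᵢ)` and `qᵢ = Φ (c - μᵢ) < 1 - α`.
The Gaussian shift family has monotone likelihood ratio, which makes `Φ` log-concave:
`Φ (a - t) Φ b ≤ Φ a Φ (b - t)` for `a ≤ b`, `t ≥ 0`. With `a = -c`, `b = c` this reads
`gᵢ (1 - α) ≤ α qᵢ`, and the bound reduces to `q₁ + q₂ - 2 q₁ q₂ < 1 - α` for `qᵢ ∈ [0, 1 - α)`,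
which holds because `α < 1/2`.
-/

open Set

instance inst_s19 : IsProbabilityMeasure stdGauss := by unfold stdGauss; infer_instance

instance : NullSingletonClass stdGauss := nullSingletonClass_gaussianReal one_ne_zero

lemma Φ_nonneg (a : ℝ) : 0 ≤ Φ a := cdf_nonneg _ _

lemma Φ_le_one (a : ℝ) : Φ a ≤ 1 := cdf_le_one _ _

lemma stdGauss_Iic (a : ℝ) : stdGauss (Iic a) = ENNReal.ofReal (Φ a) := (ofReal_cdf _ _).symm

lemma stdGauss_Iio (a : ℝ) : stdGauss (Iio a) = ENNReal.ofReal (Φ a) := by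
  rw [measure_congr Iio_ae_eq_Iic, stdGauss_Iic]

lemma stdGauss_Ioi (a : ℝ) : stdGauss (Ioi a) = ENNReal.ofReal (1 - Φ a) := by
  rw [← compl_Iic, prob_compl_eq_one_sub measurableSet_Iic, stdGauss_Iic,
    ENNReal.ofReal_sub _ (Φ_nonneg a), ENNReal.ofReal_one]

lemma Φ_neg (a : ℝ) : Φ (-a) = 1 - Φ a := by
  have hsymm : stdGauss.map Neg.neg = stdGauss := by
    simpa [stdGauss] using gaussianReal_map_neg (μ := 0) (v := 1)
  have h : stdGauss (Iic (-a)) = stdGauss (Ioi a) := by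
    nth_rw 1 [← hsymm]
    rw [Measure.map_apply measurable_neg measurableSet_Iic, neg_preimage, neg_Iic, neg_neg,
      measure_congr Ioi_ae_eq_Ici]
  rw [stdGauss_Iic, stdGauss_Ioi] at h
  exact (ENNReal.ofReal_eq_ofReal_iff (Φ_nonneg _) (sub_nonneg.2 (Φ_le_one a))).1 h

lemma Φ_sub_eq_setIntegral (a t : ℝ) : Φ (a - t) = ∫ x in Iic a, gaussianPDFReal t 1 x := by
  have hshift : gaussianReal t 1 = stdGauss.map (· + t) := by
    rw [stdGauss, gaussianReal_map_add_const, zero_add]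
  rw [Φ, cdf_eq_real, measureReal_def, ← preimage_add_const_Iic,
    ← Measure.map_apply (measurable_add_const t) measurableSet_Iic, ← hshift,
    gaussianReal_apply_eq_integral _ one_ne_zero, ENNReal.toReal_ofReal
      (integral_nonneg fun x => gaussianPDFReal_nonneg _ _ _)]

lemma Φ_sub_sub_Φ_sub (t : ℝ) {a b : ℝ} (hab : a ≤ b) :
    Φ (b - t) - Φ (a - t) = ∫ x in Ioc a b, gaussianPDFReal t 1 x := by
  rw [Φ_sub_eq_setIntegral, Φ_sub_eq_setIntegral,
    intervalIntegral.integral_Iic_sub_Iic (integrable_gaussianPDFReal t 1).integrableOn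
      (integrable_gaussianPDFReal t 1).integrableOn,
    intervalIntegral.integral_of_le hab]

lemma Φ_strictMono : StrictMono Φ := by
  intro a b hab
  have hpos : 0 < ∫ x in Ioc a b, gaussianPDFReal 0 1 x := by
    rw [setIntegral_pos_iff_support_of_nonneg_ae
      (ae_of_all _ (gaussianPDFReal_nonneg 0 1)) (integrable_gaussianPDFReal 0 1).integrableOn,
      (Function.support_eq_univ fun x => (gaussianPDFReal_pos 0 1 x one_ne_zero).ne'), univ_inter,
      Real.volume_Ioc]
    exact ENNReal.ofReal_pos.2 (sub_pos.2 hab)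
  have := Φ_sub_sub_Φ_sub 0 hab.le
  simp only [sub_zero] at this
  linarith

lemma gaussianPDFReal_eq_exp_mul (t x : ℝ) :
    gaussianPDFReal t 1 x = Real.exp (x * t - t ^ 2 / 2) * gaussianPDFReal 0 1 x := by
  simp only [gaussianPDFReal, NNReal.coe_one, mul_one, sub_zero]
  rw [mul_left_comm, ← Real.exp_add]
  ring_nf

lemma Φ_sub_mul_le {a b t : ℝ} (hab : a ≤ b) (ht : 0 ≤ t) :
    Φ (a - t) * Φ b ≤ Φ a * Φ (b - t) := by
  -- `K` is the likelihood ratio `exp (x t - t² / 2)` of `N(t, 1)` to `N(0, 1)` at `x = a`;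
  -- the ratio increases with `x`.
  set K := Real.exp (a * t - t ^ 2 / 2)
  have hratio_le {x : ℝ} (hx : x ≤ a) : gaussianPDFReal t 1 x ≤ K * gaussianPDFReal 0 1 x := by
    rw [gaussianPDFReal_eq_exp_mul]
    exact mul_le_mul_of_nonneg_right (Real.exp_le_exp.2 (by nlinarith))
      (gaussianPDFReal_nonneg 0 1 x)
  have hratio_ge {x : ℝ} (hx : a ≤ x) : K * gaussianPDFReal 0 1 x ≤ gaussianPDFReal t 1 x := by
    rw [gaussianPDFReal_eq_exp_mul t x]
    exact mul_le_mul_of_nonneg_right (Real.exp_le_exp.2 (by nlinarith))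
      (gaussianPDFReal_nonneg 0 1 x)
  have hleft : Φ (a - t) ≤ K * Φ a := by
    rw [Φ_sub_eq_setIntegral, ← sub_zero a, Φ_sub_eq_setIntegral, sub_zero, ← integral_const_mul]
    exact setIntegral_mono_on (integrable_gaussianPDFReal t 1).integrableOn
      ((integrable_gaussianPDFReal 0 1).integrableOn.const_mul K) measurableSet_Iic
      fun x hx => hratio_le hx
  have hmid : K * (Φ b - Φ a) ≤ Φ (b - t) - Φ (a - t) := by
    have h0 := Φ_sub_sub_Φ_sub 0 hab
    simp only [sub_zero] at h0
    rw [h0, Φ_sub_sub_Φ_sub t hab, ← integral_const_mul]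
    exact setIntegral_mono_on ((integrable_gaussianPDFReal 0 1).integrableOn.const_mul K)
      (integrable_gaussianPDFReal t 1).integrableOn measurableSet_Ioc
      fun x hx => hratio_ge hx.1.le
  have hΦab : Φ a ≤ Φ b := Φ_strictMono.monotone hab
  have hΦa : 0 ≤ Φ a := Φ_nonneg a
  calc Φ (a - t) * Φ b = Φ (a - t) * Φ a + Φ (a - t) * (Φ b - Φ a) := by ring
    _ ≤ Φ (a - t) * Φ a + K * Φ a * (Φ b - Φ a) := by gcongr
    _ ≤ Φ (a - t) * Φ a + Φ a * (Φ (b - t) - Φ (a - t)) := by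
        rw [mul_comm K, mul_assoc]; gcongr
    _ = Φ a * Φ (b - t) := by ring

lemma Φ_zero : Φ 0 = 1 / 2 := by
  linarith [neg_zero (G := ℝ) ▸ Φ_neg 0]

lemma mul_neg_and_lt_min_abs_iff {c x y : ℝ} (hc : 0 ≤ c) :
    x * y < 0 ∧ c < min |x| |y| ↔ (x < -c ∧ c < y) ∨ (c < x ∧ y < -c) := by
  rw [lt_min_iff, lt_abs, lt_abs]
  constructor
  · rintro ⟨hxy, hx | hx, hy | hy⟩
    · nlinarith
    · exact Or.inr ⟨hx, by linarith⟩
    · exact Or.inl ⟨by linarith, hy⟩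
    · nlinarith
  · rintro (⟨hx, hy⟩ | ⟨hx, hy⟩)
    · exact ⟨by nlinarith, Or.inr (by linarith), Or.inl hy⟩
    · exact ⟨by nlinarith, Or.inl hx, Or.inr (by linarith)⟩

lemma P2_rejection_eq {c : ℝ} (hc : 0 ≤ c) (μ₁ μ₂ : ℝ) :
    P2 {p : ℝ × ℝ | (μ₁ + p.1) * (μ₂ + p.2) < 0 ∧ c < min |μ₁ + p.1| |μ₂ + p.2|} =
      ENNReal.ofReal (Φ (-c - μ₁) * (1 - Φ (c - μ₂)) + (1 - Φ (c - μ₁)) * Φ (-c - μ₂)) := by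
  have hset : {p : ℝ × ℝ | (μ₁ + p.1) * (μ₂ + p.2) < 0 ∧ c < min |μ₁ + p.1| |μ₂ + p.2|} =
      Iio (-c - μ₁) ×ˢ Ioi (c - μ₂) ∪ Ioi (c - μ₁) ×ˢ Iio (-c - μ₂) := by
    ext ⟨x, y⟩
    simp only [mem_ofPred_eq, mul_neg_and_lt_min_abs_iff hc, mem_union, mem_prod, mem_Iio, mem_Ioi,
      lt_sub_iff_add_lt', sub_lt_iff_lt_add']
  have hdisj : Disjoint (Iio (-c - μ₁) ×ˢ Ioi (c - μ₂)) (Ioi (c - μ₁) ×ˢ Iio (-c - μ₂)) :=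
    disjoint_prod.2 <| Or.inl <| (Iic_disjoint_Ioi (by linarith)).mono_left Iio_subset_Iic_self
  have h1 (a : ℝ) : 0 ≤ 1 - Φ a := sub_nonneg.2 (Φ_le_one a)
  rw [hset, P2, measure_union hdisj (measurableSet_Ioi.prod measurableSet_Iio), Measure.prod_prod,
    Measure.prod_prod, stdGauss_Iio, stdGauss_Ioi, stdGauss_Ioi, stdGauss_Iio,
    ← ENNReal.ofReal_mul (Φ_nonneg _), ← ENNReal.ofReal_mul (h1 _),
    ← ENNReal.ofReal_add (mul_nonneg (Φ_nonneg _) (h1 _)) (mul_nonneg (h1 _) (Φ_nonneg _))]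

lemma mul_one_sub_add_one_sub_mul_lt {α g₁ g₂ q₁ q₂ : ℝ} (hα₀ : 0 < α) (hα : α < 1 / 2)
    (hq₁ : 0 ≤ q₁) (hq₁α : q₁ < 1 - α) (hq₂ : 0 ≤ q₂) (hq₂α : q₂ < 1 - α)
    (hg₁ : g₁ * (1 - α) ≤ α * q₁) (hg₂ : g₂ * (1 - α) ≤ α * q₂) :
    g₁ * (1 - q₂) + (1 - q₁) * g₂ < α := by
  -- the left side is `1/2 - 2 (q₁ - 1/2) (q₂ - 1/2)`
  have hq : q₁ * (1 - q₂) + (1 - q₁) * q₂ < 1 - α := by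
    rcases le_total q₁ (1 / 2) with h₁ | h₁ <;> rcases le_total q₂ (1 / 2) with h₂ | h₂ <;>
      nlinarith
  have hg : (g₁ * (1 - q₂) + (1 - q₁) * g₂) * (1 - α) ≤
      α * (q₁ * (1 - q₂) + (1 - q₁) * q₂) := by
    calc (g₁ * (1 - q₂) + (1 - q₁) * g₂) * (1 - α)
        = g₁ * (1 - α) * (1 - q₂) + (1 - q₁) * (g₂ * (1 - α)) := by ring
      _ ≤ α * q₁ * (1 - q₂) + (1 - q₁) * (α * q₂) := by gcongr <;> linarith
      _ = α * (q₁ * (1 - q₂) + (1 - q₁) * q₂) := by ring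
  nlinarith

/-- In the interior of the null (μ₁, μ₂ > 0), the recommended test's rejection
probability is strictly below α. -/
theorem stmt19 (α c μ₁ μ₂ : ℝ) (hα : α ∈ Set.Ioo (0:ℝ) (1/2)) (hc : Φ c = 1 - α)
    (h₁ : 0 < μ₁) (h₂ : 0 < μ₂) :
    P2 {p : ℝ × ℝ | (μ₁ + p.1) * (μ₂ + p.2) < 0 ∧ c < min |μ₁ + p.1| |μ₂ + p.2|}
      < ENNReal.ofReal α := by
  obtain ⟨hα₀, hα⟩ := hα
  have hc₀ : 0 ≤ c := Φ_strictMono.le_iff_le.1 (by linarith [Φ_zero])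
  have hΦ_neg_c : Φ (-c) = α := by rw [Φ_neg, hc]; ring
  have hΦ_lt (μ : ℝ) (hμ : 0 < μ) : Φ (c - μ) < 1 - α := hc ▸ Φ_strictMono (by linarith)
  have hlogconcave (μ : ℝ) (hμ : 0 < μ) : Φ (-c - μ) * (1 - α) ≤ α * Φ (c - μ) := by
    simpa only [hc, hΦ_neg_c] using Φ_sub_mul_le (neg_le_self hc₀) hμ.le
  rw [P2_rejection_eq hc₀, ENNReal.ofReal_lt_ofReal_iff hα₀]
  exact mul_one_sub_add_one_sub_mul_lt hα₀ hα (Φ_nonneg _) (hΦ_lt μ₁ h₁) (Φ_nonneg _)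
    (hΦ_lt μ₂ h₂) (hlogconcave μ₁ h₁) (hlogconcave μ₂ h₂)
end
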